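/- arXiv:1703.04326 — 2 statements merged into one kernel-verified Lean document; each statement's English description precedes it below -/
import Mathlib

section
/- Let u ∈ 𝒜(ℝⁿ) ∩ C²(ℝⁿ) be convex. Then for all x = (x₁,…,xₙ) ∈ [0,∞)ⁿ, (u[e])*(x) + (u*[e])*(x) ≥ Σ_{j=1}^n (x_j·ln(x_j + 1) − x_j) − n. -/
/-! Put `t j = x j + 1`. The function `a ↦ u a - ∑ t j log (a j)` is coercive on the open positive
orthant, so it has an interior minimiser `a`, where `∇u(a) = b` with `b j = t j / a j`. Convexity
gives the Fenchel equality `u* b = ⟪a, b⟫ - u a = ∑ t j - u a`. Testing the suprema defining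
`(u[e])* x` and `(u*[e])* x` at `log a` and `log b` and adding, `u a` cancels and
`log (a j) + log (b j) = log (x j + 1)` leaves `∑ (x j log (x j + 1) - x j) - n`. -/

open Filter
open scoped BigOperators Topology

noncomputable section

abbrev En (n : ℕ) := EuclideanSpace ℝ (Fin n)

/-- The closed positive orthant `[0,∞)ⁿ`. -/
def orthant (n : ℕ) : Set (En n) := {x | ∀ j, 0 ≤ x j}

/-- `g[e]`, the coordinatewise exponential substitution `g[e](x) = g(e^{x₁},…,e^{xₙ})`. -/
def expComp {n : ℕ} (g : En n → ℝ) : En n → ℝ := fun x => g (WithLp.toLp 2 (fun j => Real.exp (x j)))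

/-- The Young–Fenchel conjugate `g*(x) = sup_y (⟨x,y⟩ - g(y))`. -/
def starC {n : ℕ} (g : En n → ℝ) (x : En n) : ℝ := ⨆ y : En n, (∑ j, x j * y j - g y)

/-- `g ∈ ℬ(ℝⁿ)`: `g` is continuous on `ℝⁿ` and `g(x)/‖x‖ → +∞` as `x → ∞`. -/
def memBR {n : ℕ} (g : En n → ℝ) : Prop :=
  Continuous g ∧ Tendsto (fun x : En n => g x / ‖x‖) (cocompact (En n)) atTop

/-- `g ∈ 𝒜(ℝⁿ)`: `g` is continuous, depends only on the absolute values of the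
coordinates, is nondecreasing in each variable on the orthant, and `g(x)/‖x‖ → +∞`. -/
def IsA {n : ℕ} (g : En n → ℝ) : Prop :=
  Continuous g ∧ (∀ x : En n, g x = g (WithLp.toLp 2 (fun j => |x j|))) ∧
  (∀ x y : En n, (∀ j, 0 ≤ x j) → (∀ j, x j ≤ y j) → g x ≤ g y) ∧
  Tendsto (fun x : En n => g x / ‖x‖) (cocompact (En n)) atTop

open RealInnerProductSpace

theorem exists_mul_norm_sub_le_of_tendsto_div_norm {E : Type*} [NormedAddCommGroup E]
    [ProperSpace E] {u : E → ℝ} (hc : Continuous u)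
    (h : Tendsto (fun x => u x / ‖x‖) (cocompact E) atTop) (C : ℝ) :
    ∃ D, ∀ w, C * ‖w‖ - D ≤ u w := by
  have hne : ∀ᶠ w in cocompact E, w ≠ 0 :=
    (isCompact_singleton (x := (0 : E))).compl_mem_cocompact
  have hlim : Tendsto (fun w => ‖w‖ * (u w / ‖w‖ - C)) (cocompact E) atTop :=
    tendsto_norm_cocompact_atTop.atTop_mul_atTop₀ (tendsto_atTop_add_const_right _ (-C) h)
  have hlim' : Tendsto (fun w => u w - C * ‖w‖) (cocompact E) atTop := by
    refine hlim.congr' (hne.mono fun w hw => ?_)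
    field_simp [norm_ne_zero_iff.2 hw]
  obtain ⟨z, hz⟩ := (show Continuous fun w => u w - C * ‖w‖ by fun_prop).exists_forall_le hlim'
  exact ⟨-(u z - C * ‖z‖), fun w => by linarith [hz w]⟩

theorem ConvexOn.add_le_of_hasFDerivAt {E : Type*} [NormedAddCommGroup E] [NormedSpace ℝ E]
    {u : E → ℝ} (hconv : ConvexOn ℝ Set.univ u) {f' : E →L[ℝ] ℝ} {a : E}
    (hd : HasFDerivAt u f' a) (w : E) : u a + f' (w - a) ≤ u w := by
  let g : ℝ → ℝ := fun s => u (AffineMap.lineMap a w s)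
  have hg : HasDerivAt g (f' (w - a)) 0 := by
    have hline : HasDerivAt (fun s : ℝ => AffineMap.lineMap a w s) (w - a) 0 := by
      simpa [AffineMap.lineMap_apply_module'] using
        ((hasDerivAt_id (0 : ℝ)).smul_const (w - a)).add_const a
    exact (by simpa using hd : HasFDerivAt u f' (AffineMap.lineMap a w (0 : ℝ))).comp_hasDerivAt
      0 hline
  have := (hconv.comp_affineMap (AffineMap.lineMap a w)).le_slope_of_hasDerivAt
    (Set.mem_univ 0) (Set.mem_univ 1) one_pos hg
  simp only [slope_def_field, Function.comp_apply, AffineMap.lineMap_apply_one,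
    AffineMap.lineMap_apply_zero, sub_zero, div_one] at this
  linarith

theorem IsCompact.exists_isLocalMin_of_sublevel_subset {X : Type*} [TopologicalSpace X]
    {f : X → ℝ} {U K : Set X} (hK : IsCompact K) (hU : IsOpen U) (hKU : K ⊆ U)
    (hf : ContinuousOn f U) {x₀ : X} (hx₀ : x₀ ∈ U) (hsub : ∀ x ∈ U, f x ≤ f x₀ → x ∈ K) :
    ∃ a ∈ U, IsLocalMin f a := by
  obtain ⟨a, haK, hmin⟩ := hK.exists_isMinOn ⟨x₀, hsub x₀ hx₀ le_rfl⟩ (hf.mono hKU)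
  have hminU : IsMinOn f U a := fun x hx => by
    by_cases hfx : f x ≤ f x₀
    · exact hmin (hsub x hx hfx)
    · exact (hmin (hsub x₀ hx₀ le_rfl)).trans (le_of_not_ge hfx)
  exact ⟨a, hKU haK, hminU.isLocalMin (hU.mem_nhds (hKU haK))⟩

section

variable {n : ℕ}

theorem sum_mul_eq_inner (x y : En n) : ∑ j, x j * y j = ⟪x, y⟫ := by
  simp [PiLp.inner_apply, mul_comm]

-- `starC u b` is a `⨆` in `ℝ`, which bounds its terms only when they are bounded above; the
-- growth hypothesis provides that.
theorem le_starC {u : En n → ℝ} {b : En n} (hu : ∃ D, ∀ w, ‖b‖ * ‖w‖ - D ≤ u w) (w : En n) :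
    ⟪b, w⟫ - u w ≤ starC u b := by
  obtain ⟨D, hD⟩ := hu
  simp only [starC, sum_mul_eq_inner]
  refine le_ciSup (f := fun y => ⟪b, y⟫ - u y) ⟨D, ?_⟩ w
  rintro _ ⟨y, rfl⟩
  linarith [real_inner_le_norm b y, hD y]

theorem starC_eq_of_hasFDerivAt {u : En n → ℝ} (hconv : ConvexOn ℝ Set.univ u) {a b : En n}
    (hu : ∃ D, ∀ w, ‖b‖ * ‖w‖ - D ≤ u w) (hd : HasFDerivAt u (innerSL ℝ b) a) :
    starC u b = ⟪a, b⟫ - u a := by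
  refine le_antisymm (ciSup_le fun w => ?_) (real_inner_comm a b ▸ le_starC hu a)
  have := hconv.add_le_of_hasFDerivAt hd w
  rw [innerSL_apply_apply, inner_sub_right, sum_mul_eq_inner, real_inner_comm a b] at *
  linarith

theorem exists_mul_norm_sub_le_starC {u : En n → ℝ} (hc : Continuous u)
    (hu : ∀ C, ∃ D, ∀ w, C * ‖w‖ - D ≤ u w) {C : ℝ} (hC : 0 ≤ C) :
    ∃ M, ∀ q, C * ‖q‖ - M ≤ starC u q := by
  obtain ⟨M, hM⟩ := (isCompact_closedBall (0 : En n) C).bddAbove_image hc.continuousOn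
  refine ⟨M, fun q => ?_⟩
  obtain ⟨w, hw, hqw⟩ : ∃ w : En n, ‖w‖ ≤ C ∧ ⟪q, w⟫ = C * ‖q‖ := by
    rcases eq_or_ne q 0 with rfl | hq
    · exact ⟨0, by simpa using hC, by simp⟩
    · have hq' : ‖q‖ ≠ 0 := norm_ne_zero_iff.2 hq
      refine ⟨(C / ‖q‖) • q, ?_, ?_⟩
      · rw [norm_smul, Real.norm_of_nonneg (by positivity), div_mul_cancel₀ _ hq']
      · rw [real_inner_smul_right, real_inner_self_eq_norm_sq]
        field_simp
  have hconj := le_starC (hu ‖q‖) w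
  have huw := hM ⟨w, by simpa using hw, rfl⟩
  linarith

theorem le_starC_expComp {g : En n → ℝ} {x : En n} (hx : x ∈ orthant n)
    (hg : ∃ D, ∀ w, ‖x‖ * ‖w‖ - D ≤ g w) {a : En n} (ha : ∀ j, 0 < a j) :
    ∑ j, x j * Real.log (a j) - g a ≤ starC (expComp g) x := by
  obtain ⟨D, hD⟩ := hg
  have hexp : ∀ y : En n, ∑ j, x j * y j ≤ ⟪x, WithLp.toLp 2 fun j => Real.exp (y j)⟫ :=
    fun y => (sum_mul_eq_inner x _) ▸ Finset.sum_le_sum fun j _ =>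
      mul_le_mul_of_nonneg_left ((Real.add_one_le_exp _).trans' (by linarith)) (hx j)
  have hbdd : BddAbove (Set.range fun y : En n => ∑ j, x j * y j - expComp g y) := by
    refine ⟨D, ?_⟩
    rintro _ ⟨y, rfl⟩
    change ∑ j, x j * y j - g (WithLp.toLp 2 fun j => Real.exp (y j)) ≤ D
    linarith [hexp y, real_inner_le_norm x (WithLp.toLp 2 fun j => Real.exp (y j)),
      hD (WithLp.toLp 2 fun j => Real.exp (y j))]
  have hlog : expComp g (WithLp.toLp 2 fun j => Real.log (a j)) = g a := by
    simp [expComp, Real.exp_log (ha _)]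
  simpa [starC, hlog] using le_ciSup hbdd (WithLp.toLp 2 fun j => Real.log (a j))

theorem isOpen_setOf_forall_pos : IsOpen {a : En n | ∀ j, 0 < a j} := by
  simp only [Set.ofPred_forall]
  exact isOpen_iInter_of_finite fun j => isOpen_lt continuous_const (by fun_prop)

theorem exists_isCompact_sublevel_sub_sum_mul_log {u : En n → ℝ}
    (hu : ∀ C, ∃ D, ∀ w, C * ‖w‖ - D ≤ u w) {t : Fin n → ℝ} (ht : ∀ j, 0 < t j) (c : ℝ) :
    ∃ K, IsCompact K ∧ K ⊆ {a : En n | ∀ j, 0 < a j} ∧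
      ∀ a : En n, (∀ j, 0 < a j) → u a - ∑ j, t j * Real.log (a j) ≤ c → a ∈ K := by
  obtain ⟨D, hD⟩ := hu (1 + ∑ j, t j)
  set M := c + D
  refine ⟨Metric.closedBall 0 M ∩ {a | ∀ j, Real.exp (-M / t j) ≤ a j}, ?_, ?_, ?_⟩
  · refine (isCompact_closedBall 0 M).inter_right ?_
    simp only [Set.ofPred_forall]
    exact isClosed_iInter fun j => isClosed_le continuous_const (by fun_prop)
  · exact fun a ha j => (Real.exp_pos _).trans_le (ha.2 j)
  intro a ha hΦ
  have hterm : ∀ j, 0 ≤ t j * (a j - Real.log (a j)) := fun j =>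
    mul_nonneg (ht j).le (by linarith [Real.log_le_sub_one_of_pos (ha j)])
  -- `u a ≥ (1 + ∑ t) ‖a‖ - D` and `a j ≤ ‖a‖` give `u a - ∑ t log a ≥ ‖a‖ + ∑ t (a - log a) - D`
  have hbound : ‖a‖ + ∑ j, t j * (a j - Real.log (a j)) ≤ M := by
    have : ∑ j, t j * a j ≤ (∑ j, t j) * ‖a‖ := by
      rw [Finset.sum_mul]
      exact Finset.sum_le_sum fun j _ => mul_le_mul_of_nonneg_left
        ((le_abs_self _).trans (PiLp.norm_apply_le a j)) (ht j).le
    have := hD a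
    simp only [mul_sub, Finset.sum_sub_distrib]
    linarith
  have hsum := Finset.sum_nonneg fun j (_ : j ∈ Finset.univ) => hterm j
  refine ⟨by simpa using (by linarith : ‖a‖ ≤ M), fun j => ?_⟩
  have hj := Finset.single_le_sum (fun j _ => hterm j) (Finset.mem_univ j)
  have : -M / t j ≤ Real.log (a j) := by
    rw [div_le_iff₀ (ht j)]
    nlinarith [norm_nonneg a, ha j, ht j]
  simpa [Real.exp_log (ha j)] using Real.exp_le_exp.2 this

theorem hasFDerivAt_sum_mul_log (t : Fin n → ℝ) {a : En n} (ha : ∀ j, 0 < a j) :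
    HasFDerivAt (fun w : En n => ∑ j, t j * Real.log (w j))
      (innerSL ℝ (WithLp.toLp 2 fun j => t j / a j)) a := by
  refine (HasFDerivAt.fun_sum (u := Finset.univ) fun j _ =>
    ((Real.hasDerivAt_log (ha j).ne').comp_hasFDerivAt a
      (EuclideanSpace.proj (𝕜 := ℝ) j).hasFDerivAt).const_mul (t j)).congr_fderiv ?_
  ext w
  simp [PiLp.inner_apply, div_eq_mul_inv, mul_comm, mul_assoc]

theorem exists_hasFDerivAt_eq_innerSL_div {u : En n → ℝ} (hc : Continuous u)
    (hdiff : Differentiable ℝ u) (hu : ∀ C, ∃ D, ∀ w, C * ‖w‖ - D ≤ u w) {t : Fin n → ℝ}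
    (ht : ∀ j, 0 < t j) :
    ∃ a : En n, (∀ j, 0 < a j) ∧
      HasFDerivAt u (innerSL ℝ (WithLp.toLp 2 fun j => t j / a j)) a := by
  set one : En n := WithLp.toLp 2 fun _ => 1
  obtain ⟨K, hK, hKU, hsub⟩ := exists_isCompact_sublevel_sub_sum_mul_log hu ht
    (u one - ∑ j, t j * Real.log (one j))
  have hcont : ContinuousOn (fun a : En n => u a - ∑ j, t j * Real.log (a j))
      {a : En n | ∀ j, 0 < a j} := by
    refine hc.continuousOn.sub (continuousOn_finsetSum _ fun j _ => continuousOn_const.mul ?_)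
    exact Real.continuousOn_log.comp (by fun_prop) fun a ha => (ha j).ne'
  obtain ⟨a, ha, hmin⟩ := hK.exists_isLocalMin_of_sublevel_subset isOpen_setOf_forall_pos hKU
    hcont (x₀ := one) (fun _ => one_pos) hsub
  have := hmin.hasFDerivAt_eq_zero ((hdiff a).hasFDerivAt.sub (hasFDerivAt_sum_mul_log t ha))
  exact ⟨a, ha, sub_eq_zero.1 this ▸ (hdiff a).hasFDerivAt⟩

end

theorem stmt15 (n : ℕ) (u : En n → ℝ) (hu : IsA u)
    (hC2 : ContDiff ℝ 2 u) (hconv : ConvexOn ℝ Set.univ u) :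
    ∀ x ∈ orthant n,
      starC (expComp u) x + starC (expComp (starC u)) x ≥
        (∑ j, (x j * Real.log (x j + 1) - x j)) - n := by
  intro x hx
  have hgrowth := exists_mul_norm_sub_le_of_tendsto_div_norm hu.1 hu.2.2.2
  have ht : ∀ j, 0 < x j + 1 := fun j => by linarith [hx j]
  obtain ⟨a, ha, hd⟩ := exists_hasFDerivAt_eq_innerSL_div hu.1 (hC2.differentiable (by simp))
    hgrowth ht
  set b : En n := WithLp.toLp 2 fun j => (x j + 1) / a j
  have hb : ∀ j, 0 < b j := fun j => div_pos (ht j) (ha j)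
  have hab : ∀ j, a j * b j = x j + 1 := fun j => mul_div_cancel₀ _ (ha j).ne'
  have hua := le_starC_expComp hx (hgrowth ‖x‖) ha
  have hub := le_starC_expComp hx (exists_mul_norm_sub_le_starC hu.1 hgrowth (norm_nonneg x)) hb
  rw [starC_eq_of_hasFDerivAt hconv (hgrowth ‖b‖) hd, ← sum_mul_eq_inner] at hub
  have hlog : ∑ j, x j * Real.log (a j) + ∑ j, x j * Real.log (b j)
      = ∑ j, x j * Real.log (x j + 1) := by
    rw [← Finset.sum_add_distrib]
    refine Finset.sum_congr rfl fun j _ => ?_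
    rw [← mul_add, ← Real.log_mul (ha j).ne' (hb j).ne', hab]
  have hsum : ∑ j, a j * b j = ∑ j, x j + n := by
    simp [hab, Finset.sum_add_distrib]
  rw [Finset.sum_sub_distrib]
  linarith
end
end

section
/- Let Φ = {φ_ν}_{ν=1}^∞ be a sequence of functions in 𝒜(ℝⁿ) satisfying condition (i₀): for each ν ∈ ℕ and each A > 0 there exists C_{ν,A} > 0 such that φ_ν(x) + A·ln(1+‖x‖) ≤ φ_{ν+1}(x) + C_{ν,A} for all x ∈ ℝⁿ. Set ψ_ν = φ_ν[e]. Then for each k ∈ ℕ and each A > 0 there exists a constant C > 0 such that for all x = (x₁,…,xₙ) ∈ [0,∞)ⁿ, (ψ_k*)*(x) + A·Σ_{j=1}^n x_j ≤ (ψ_{k+1}*)*(x) + C. -/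
open Filter
open scoped BigOperators Topology

noncomputable section

/-- Young–Fenchel conjugate with values in the extended reals. -/
def econj {n : ℕ} (g : En n → EReal) (x : En n) : EReal :=
  ⨆ y : En n, (((∑ j, x j * y j : ℝ) : EReal) - g y)

/-- The second Young–Fenchel conjugate `(ψ*)*` of a real-valued function `ψ`. -/
def ddconj {n : ℕ} (ψ : En n → ℝ) : En n → EReal :=
  econj (econj (fun y => ((ψ y : ℝ) : EReal)))

/-!
With `x = e^t` one has `tⱼ ≤ ln(1 + ‖x‖)` for every `j`, so condition (i₀) with `A` replaced by
`(n + 1) A` gives `ψ_k(t) + A ∑ tⱼ ≤ ψ_{k+1}(t) + C` for all `t`. Conjugating turns this linear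
gain into the shift `ψ_{k+1}*(y + A·𝟙) ≤ ψ_k*(y) + C`, and conjugating once more turns the shift
back into the gain `A ∑ xⱼ` between the second conjugates.
-/

section LogBound

variable {n : ℕ}

def expVec (t : En n) : En n := WithLp.toLp 2 fun i => Real.exp (t i)

lemma apply_le_log_one_add_norm_expVec (t : En n) (j : Fin n) :
    t j ≤ Real.log (1 + ‖expVec t‖) := by
  have h := PiLp.norm_apply_le (expVec t) j
  rw [show ‖expVec t j‖ = Real.exp (t j) from Real.norm_of_nonneg (Real.exp_pos _).le] at h
  calc t j = Real.log (Real.exp (t j)) := (Real.log_exp _).symm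
    _ ≤ _ := Real.log_le_log (Real.exp_pos _) (by linarith)

lemma sum_le_mul_log_one_add_norm_expVec (t : En n) :
    ∑ j, t j ≤ n * Real.log (1 + ‖expVec t‖) := by
  simpa using
    Finset.sum_le_sum fun j (_ : j ∈ Finset.univ) => apply_le_log_one_add_norm_expVec t j

lemma expComp_add_mul_sum_le {f g : En n → ℝ} {A B C : ℝ} (hA : 0 ≤ A) (hB : n * A ≤ B)
    (h : ∀ x, f x + B * Real.log (1 + ‖x‖) ≤ g x + C) (t : En n) :
    expComp f t + A * ∑ j, t j ≤ expComp g t + C := by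
  have hL : 0 ≤ Real.log (1 + ‖expVec t‖) :=
    Real.log_nonneg (by linarith [norm_nonneg (expVec t)])
  have hsum : A * ∑ j, t j ≤ B * Real.log (1 + ‖expVec t‖) :=
    calc A * ∑ j, t j ≤ A * (n * Real.log (1 + ‖expVec t‖)) :=
          mul_le_mul_of_nonneg_left (sum_le_mul_log_one_add_norm_expVec t) hA
      _ = (n * A) * Real.log (1 + ‖expVec t‖) := by ring
      _ ≤ B * Real.log (1 + ‖expVec t‖) := mul_le_mul_of_nonneg_right hB hL
  show f (expVec t) + _ ≤ g (expVec t) + _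
  linarith [h (expVec t)]

end LogBound

section Conjugate

variable {n : ℕ}

lemma sum_mul_add_eq (x y a : En n) :
    ∑ j, x j * (y + a) j = ∑ j, x j * y j + ∑ j, x j * a j := by
  simp only [PiLp.add_apply, mul_add, Finset.sum_add_distrib]

lemma econj_add_le_econj {f g : En n → ℝ} {a : En n} {C : ℝ}
    (h : ∀ t, f t + ∑ j, a j * t j ≤ g t + C) (y : En n) :
    econj (fun t => (g t : EReal)) (y + a) ≤ econj (fun t => (f t : EReal)) y + C := by
  refine iSup_le fun t => ?_
  have hreal : ∑ j, (y + a) j * t j - g t ≤ (∑ j, y j * t j - f t) + C := by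
    simp only [PiLp.add_apply, add_mul, Finset.sum_add_distrib]
    linarith [h t]
  calc ((∑ j, (y + a) j * t j : ℝ) : EReal) - g t
      = ((∑ j, (y + a) j * t j - g t : ℝ) : EReal) := (EReal.coe_sub _ _).symm
    _ ≤ ((∑ j, y j * t j - f t : ℝ) : EReal) + C := by exact_mod_cast hreal
    _ ≤ econj (fun t => (f t : EReal)) y + C := by
        rw [EReal.coe_sub]
        exact add_le_add_left (le_iSup (fun s => ((∑ j, y j * s j : ℝ) : EReal) - f s) t) _

lemma coe_add_sub_add_coe_add_coe (u r C : ℝ) (F : EReal) :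
    ((u + r : ℝ) : EReal) - (F + C) + C = (u : EReal) - F + r := by
  induction F using EReal.rec with
  | bot => simp
  | top => simp
  | coe F => norm_cast; ring

lemma econj_add_sum_mul_le_econj {F G : En n → EReal} {a : En n} {C : ℝ}
    (h : ∀ y, G (y + a) ≤ F y + C) (x : En n) :
    econj F x + ((∑ j, x j * a j : ℝ) : EReal) ≤ econj G x + C := by
  set r := ∑ j, x j * a j
  rw [← EReal.le_sub_iff_add_le (.inl (EReal.coe_ne_bot r)) (.inl (EReal.coe_ne_top r))]
  refine iSup_le fun y => ?_
  rw [EReal.le_sub_iff_add_le (.inl (EReal.coe_ne_bot r)) (.inl (EReal.coe_ne_top r))]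
  calc ((∑ j, x j * y j : ℝ) : EReal) - F y + r
      = ((∑ j, x j * y j + r : ℝ) : EReal) - (F y + C) + C :=
        (coe_add_sub_add_coe_add_coe _ _ _ _).symm
    _ ≤ ((∑ j, x j * (y + a) j : ℝ) : EReal) - G (y + a) + C := by
        rw [sum_mul_add_eq]
        exact add_le_add_left (EReal.sub_le_sub le_rfl (h y)) _
    _ ≤ econj G x + C :=
        add_le_add_left (le_iSup (fun s => ((∑ j, x j * s j : ℝ) : EReal) - G s) (y + a)) _

end Conjugate

theorem stmt17_general (n : ℕ) (φ : ℕ → En n → ℝ)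
    (hi0 : ∀ ν : ℕ, ∀ A > (0:ℝ), ∃ C > (0:ℝ), ∀ x : En n,
      φ ν x + A * Real.log (1 + ‖x‖) ≤ φ (ν+1) x + C) :
    ∀ (k : ℕ), ∀ A > (0:ℝ), ∃ C > (0:ℝ), ∀ x ∈ orthant n,
      ddconj (expComp (φ k)) x + ((A * ∑ j, x j : ℝ) : EReal) ≤
        ddconj (expComp (φ (k+1))) x + ((C : ℝ) : EReal) := by
  intro k A hA
  obtain ⟨C, hC, hφ⟩ := hi0 k ((n + 1) * A) (by positivity)
  refine ⟨C, hC, fun x _ => ?_⟩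
  set a : En n := WithLp.toLp 2 (fun _ => A)
  have hψ : ∀ t, expComp (φ k) t + ∑ j, a j * t j ≤ expComp (φ (k + 1)) t + C := by
    intro t
    simpa [a, Finset.mul_sum] using expComp_add_mul_sum_le hA.le (by nlinarith) hφ t
  have hgain : A * ∑ j, x j = ∑ j, x j * a j := by simp [a, Finset.mul_sum, mul_comm]
  rw [hgain]
  exact econj_add_sum_mul_le_econj (econj_add_le_econj hψ) x

theorem stmt17 (n : ℕ) (φ : ℕ → En n → ℝ)
    (hA : ∀ ν, IsA (φ ν))
    (hi0 : ∀ ν : ℕ, ∀ A > (0:ℝ), ∃ C > (0:ℝ), ∀ x : En n,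
      φ ν x + A * Real.log (1 + ‖x‖) ≤ φ (ν+1) x + C) :
    ∀ (k : ℕ), ∀ A > (0:ℝ), ∃ C > (0:ℝ), ∀ x ∈ orthant n,
      ddconj (expComp (φ k)) x + ((A * ∑ j, x j : ℝ) : EReal) ≤
        ddconj (expComp (φ (k+1))) x + ((C : ℝ) : EReal) :=
  stmt17_general n φ hi0
end
end
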